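/- (Core criterion.) Let T be a closed semiregular operator in a Hilbert C*-module E over A and let 𝓔 ⊆ dom(T) be an A-submodule. Then 𝓔 is a core for T (i.e. dense in dom(T) with respect to the graph norm) if and only if for every state ω on A the subspace ι_ω(𝓔) is a core for the localized operator T^ω in the Hilbert space E^ω. -/

import Mathlib

open scoped ComplexOrder RightActions InnerProductSpace
open CStarModule

noncomputable section

/-- The Hilbert C⋆-module class of the older Mathlib (right `A`-modules via `SMul Aᵐᵒᵖ E`),
kept here because Mathlib's `CStarModule` now uses left modules. -/
class RightCStarModule (A : outParam <| Type*) (E : Type*) [NonUnitalSemiring A] [StarRing A]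
    [Module ℂ A] [AddCommGroup E] [Module ℂ E] [PartialOrder A] [SMul Aᵐᵒᵖ E] [Norm A] [Norm E]
    extends Inner A E where
  inner_add_right {x} {y} {z} : inner x (y + z) = inner x y + inner x z
  inner_self_nonneg {x} : 0 ≤ inner x x
  inner_self {x} : inner x x = 0 ↔ x = 0
  inner_op_smul_right {a : A} {x y : E} : inner x (y <• a) = inner x y * a
  inner_smul_right_complex {z : ℂ} {x} {y} : inner x (z • y) = z • inner x y
  star_inner x y : star (inner x y) = inner y x
  norm_eq_sqrt_norm_inner_self x : ‖x‖ = √‖inner x x‖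

/-- An unbounded operator in a Hilbert C⋆-module `E`: a `ℂ`-linear map defined on a
`ℂ`-submodule of `E`. -/
structure UnboundedOperator (E : Type*) [NormedAddCommGroup E] [Module ℂ E] where
  dom : Submodule ℂ E
  toFun : dom →ₗ[ℂ] E

namespace UnboundedOperator

variable {A E : Type*} [CStarAlgebra A] [PartialOrder A] [StarOrderedRing A]
  [NormedAddCommGroup E] [Module ℂ E] [SMul Aᵐᵒᵖ E] [RightCStarModule A E]

/-- `y` and `z` satisfy the adjoint relation for `T`: `⟪Tx, y⟫ = ⟪x, z⟫` for all `x ∈ dom T`. -/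
def AdjRel (T : UnboundedOperator E) (y z : E) : Prop :=
  ∀ x : T.dom, ⟪T.toFun x, y⟫_A = ⟪(x : E), z⟫_A

/-- The domain of the adjoint of `T`. -/
def adjDom (T : UnboundedOperator E) : Set E := {y | ∃ z, T.AdjRel (A := A) y z}

/-- `T` is semiregular: both `T` and its adjoint are densely defined. -/
def Semiregular (T : UnboundedOperator E) : Prop :=
  Dense (T.dom : Set E) ∧ Dense (T.adjDom (A := A))

/-- The graph of `T` as a subset of `E × E`. -/
def graph (T : UnboundedOperator E) : Set (E × E) :=
  {p | ∃ x : T.dom, p = ((x : E), T.toFun x)}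

/-- `T` is a closed operator. -/
def IsClosedOp (T : UnboundedOperator E) : Prop := IsClosed T.graph

/-- `S` is the adjoint of `T`. -/
def IsAdjointOf (S T : UnboundedOperator E) : Prop :=
  (S.dom : Set E) = T.adjDom (A := A) ∧ ∀ y : S.dom, T.AdjRel (A := A) (y : E) (S.toFun y)

/-- `T` is symmetric. -/
def Symmetric (T : UnboundedOperator E) : Prop :=
  ∀ x y : T.dom, ⟪T.toFun x, (y : E)⟫_A = ⟪(x : E), T.toFun y⟫_A

/-- `T` is selfadjoint: it is its own adjoint. -/
def SelfAdjointOp (T : UnboundedOperator E) : Prop := IsAdjointOf (A := A) T T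

/-- The range of `I + S ∘ T` (for `S` the adjoint of `T` this is the range of `I + T⋆T`). -/
def ranIdAddMul (S T : UnboundedOperator E) : Set E :=
  {y | ∃ (x : T.dom) (hx : T.toFun x ∈ S.dom), y = (x : E) + S.toFun ⟨T.toFun x, hx⟩}

/-- `T` is regular: it is closed, semiregular, and `I + T⋆T` has dense range. -/
def Regular (T : UnboundedOperator E) : Prop :=
  T.IsClosedOp ∧ T.Semiregular (A := A) ∧
    ∀ S : UnboundedOperator E, IsAdjointOf (A := A) S T → Dense (ranIdAddMul S T)

/-- `Tc` is the closure of `T`: its graph is the closure of the graph of `T`. -/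
def IsClosureOf (Tc T : UnboundedOperator E) : Prop :=
  Tc.graph = closure T.graph

end UnboundedOperator

/-- A state on a C⋆-algebra: a positive continuous linear functional of norm one. -/
structure CStarState (A : Type*) [CStarAlgebra A] [PartialOrder A] where
  toFun : A →L[ℂ] ℂ
  pos : ∀ a : A, 0 ≤ a → 0 ≤ toFun a
  norm_one : ‖toFun‖ = 1

namespace CStarState

variable {A E : Type*} [CStarAlgebra A] [PartialOrder A] [StarOrderedRing A]
  [NormedAddCommGroup E] [Module ℂ E] [SMul Aᵐᵒᵖ E] [RightCStarModule A E]

/-- A pure state: an extreme point of the state space. -/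
def IsPure (ω : CStarState A) : Prop :=
  ∀ (φ ψ : CStarState A) (t : ℝ), 0 < t → t < 1 →
    (∀ a : A, ω.toFun a = (t : ℂ) * φ.toFun a + ((1 - t : ℝ) : ℂ) * ψ.toFun a) →
    φ.toFun = ω.toFun ∧ ψ.toFun = ω.toFun

/-- The squared seminorm on `E` induced by the state `ω`: the squared norm of the image
of `x` in the localization Hilbert space `E^ω`. -/
def locSq (ω : CStarState A) (x : E) : ℝ := (ω.toFun (⟪x, x⟫_A : A)).re

end CStarState

/-!
Localizing at a state can only decrease the graph seminorm, which gives one direction.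
Conversely, if `x ∈ dom T` stays at graph distance `ε` from `𝓔`, the positive elements
`⟪x - y, x - y⟫_T` (`y ∈ 𝓔`) of `A` all have norm at least `ε / 2`. The map `y ↦ ⟪x - y, x - y⟫_T`
is convex for the order of `A`, so the upper closure of these elements is a convex set, disjoint
from the open convex set `-A₊ + B(0, ε / 2)`. A real functional separating the two is positive,
and its normalized complexification is a state `ω` with `ω ⟪x - y, x - y⟫_T` bounded below
uniformly in `y ∈ 𝓔`, i.e. `ι_ω(𝓔)` is not a core for `T^ω`.
-/

open scoped Pointwise ComplexStarModule

namespace RightCStarModule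

variable {A E : Type*} [CStarAlgebra A] [PartialOrder A]
  [NormedAddCommGroup E] [Module ℂ E] [SMul Aᵐᵒᵖ E] [RightCStarModule A E]

lemma inner_add_left {x y z : E} : ⟪x + y, z⟫_A = ⟪x, z⟫_A + ⟪y, z⟫_A := by
  rw [← star_inner z, RightCStarModule.inner_add_right, star_add, star_inner, star_inner]

lemma inner_sub_right {x y z : E} : ⟪x, y - z⟫_A = ⟪x, y⟫_A - ⟪x, z⟫_A := by
  rw [sub_eq_add_neg, RightCStarModule.inner_add_right, ← neg_one_smul ℂ z,
    RightCStarModule.inner_smul_right_complex, neg_one_smul, ← sub_eq_add_neg]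

lemma inner_sub_left {x y z : E} : ⟪x - y, z⟫_A = ⟪x, z⟫_A - ⟪y, z⟫_A := by
  rw [← star_inner z, RightCStarModule.inner_sub_right, star_sub, star_inner, star_inner]

lemma inner_smul_right_real {r : ℝ} {x y : E} : ⟪x, r • y⟫_A = r • ⟪x, y⟫_A := by
  rw [← Complex.coe_smul, RightCStarModule.inner_smul_right_complex, Complex.coe_smul]

lemma inner_smul_left_real {r : ℝ} {x y : E} : ⟪r • x, y⟫_A = r • ⟪x, y⟫_A := by
  rw [← star_inner y, RightCStarModule.inner_smul_right_real, star_smul, star_inner,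
    star_trivial]

lemma norm_sq_eq_norm_inner_self (x : E) : ‖x‖ ^ 2 = ‖⟪x, x⟫_A‖ := by
  rw [RightCStarModule.norm_eq_sqrt_norm_inner_self x, Real.sq_sqrt (norm_nonneg _)]

/-- For `t + s = 1`: `t ⟪x, x⟫ + s ⟪y, y⟫ - ⟪t x + s y, t x + s y⟫ = t s ⟪x - y, x - y⟫ ≥ 0`. -/
theorem convexOn_inner_self [StarOrderedRing A] : ConvexOn ℝ Set.univ fun x : E => ⟪x, x⟫_A := by
  refine ⟨convex_univ, fun x _ y _ t s ht hs hts => ?_⟩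
  obtain rfl : s = 1 - t := by linarith
  have key : t • ⟪x, x⟫_A + (1 - t) • ⟪y, y⟫_A - ⟪t • x + (1 - t) • y, t • x + (1 - t) • y⟫_A
      = (t * (1 - t)) • ⟪x - y, x - y⟫_A := by
    simp only [RightCStarModule.inner_sub_left, RightCStarModule.inner_sub_right,
      RightCStarModule.inner_add_left, RightCStarModule.inner_add_right,
      RightCStarModule.inner_smul_left_real, RightCStarModule.inner_smul_right_real, smul_sub]
    module
  rw [← sub_nonneg, key]
  exact smul_nonneg (mul_nonneg ht hs) RightCStarModule.inner_self_nonneg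

end RightCStarModule

theorem ConvexOn.convex_upperClosure_image {𝕜 E β : Type*} [Semiring 𝕜] [PartialOrder 𝕜]
    [AddCommMonoid E] [Module 𝕜 E] [AddCommMonoid β] [PartialOrder β] [IsOrderedAddMonoid β]
    [Module 𝕜 β] [PosSMulMono 𝕜 β] {s : Set E} {f : E → β} (hf : ConvexOn 𝕜 s f) :
    Convex 𝕜 (upperClosure (f '' s) : Set β) := by
  have hepi : (upperClosure (f '' s) : Set β)
      = LinearMap.snd 𝕜 E β '' {p | p.1 ∈ s ∧ f p.1 ≤ p.2} := by
    ext b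
    simp [mem_upperClosure]
  rw [hepi]
  exact hf.convex_epigraph.linear_image _

lemma nonneg_of_forall_apply_neg_lt {E F : Type*} [AddCommGroup E] [PartialOrder E]
    [IsOrderedAddMonoid E] [FunLike F E ℝ] [AddMonoidHomClass F E ℝ] (f : F) {u : ℝ}
    (h : ∀ c, 0 ≤ c → f (-c) < u) {c : E} (hc : 0 ≤ c) : 0 ≤ f c := by
  by_contra! hneg
  obtain ⟨n, hn⟩ := exists_nat_gt (u / -f c)
  have hnc := h (n • c) (nsmul_nonneg hc n)
  rw [map_neg, map_nsmul, nsmul_eq_mul] at hnc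
  rw [div_lt_iff₀ (neg_pos.2 hneg)] at hn
  linarith

lemma Module.Dual.extendRCLike_realPart_apply_of_isSelfAdjoint {A : Type*} [AddCommGroup A]
    [Module ℂ A] [StarAddMonoid A] [StarModule ℂ A] (f : Module.Dual ℝ A) {a : A}
    (ha : IsSelfAdjoint a) :
    extendRCLike (𝕜 := ℂ) (f ∘ₗ (selfAdjoint.submodule ℝ A).subtype ∘ₗ realPart) a = f a := by
  change (f (ℜ a : A) : ℂ) - Complex.I * f (ℜ (Complex.I • a) : A) = f a
  simp [ha.imaginaryPart, ha.coe_realPart]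

section CStarAlgebra

variable {A : Type*} [CStarAlgebra A] [PartialOrder A] [StarOrderedRing A]

lemma apply_le_norm_mul_apply_one (f : Module.Dual ℝ A) (hf : ∀ a, 0 ≤ a → 0 ≤ f a) {a : A}
    (ha : IsSelfAdjoint a) : f a ≤ ‖a‖ * f 1 := by
  have h := hf _ (sub_nonneg.2 ha.le_algebraMap_norm_self)
  rwa [map_sub, Algebra.algebraMap_eq_smul_one, map_smul, smul_eq_mul, sub_nonneg] at h

namespace PositiveLinearMap

/-- The complex functional `a ↦ f (ℜ a) + I f (ℑ a)`. -/
def ofRealNonneg (f : Module.Dual ℝ A) (hf : ∀ a, 0 ≤ a → 0 ≤ f a) : A →ₚ[ℂ] ℂ :=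
  .mk₀ (Module.Dual.extendRCLike (f ∘ₗ (selfAdjoint.submodule ℝ A).subtype ∘ₗ realPart))
    fun a ha => by
      rw [Module.Dual.extendRCLike_realPart_apply_of_isSelfAdjoint f (.of_nonneg ha)]
      exact_mod_cast hf a ha

lemma ofRealNonneg_apply_of_isSelfAdjoint (f : Module.Dual ℝ A) (hf : ∀ a, 0 ≤ a → 0 ≤ f a)
    {a : A} (ha : IsSelfAdjoint a) : ofRealNonneg f hf a = f a :=
  Module.Dual.extendRCLike_realPart_apply_of_isSelfAdjoint f ha

/-- Cauchy–Schwarz in the GNS space of `φ`, applied to `1` and `a`. -/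
lemma norm_apply_le_norm_apply_one (φ : A →ₚ[ℂ] ℂ) (a : A) : ‖φ a‖ ≤ ‖φ 1‖ * ‖a‖ := by
  have hcs := norm_inner_le_norm (𝕜 := ℂ) (φ.toPreGNS 1) (φ.toPreGNS a)
  rw [preGNS_inner_def, ofPreGNS_toPreGNS, ofPreGNS_toPreGNS, star_one, one_mul] at hcs
  have h1 : ‖φ 1‖ = ‖φ.toPreGNS 1‖ ^ 2 := by
    simpa using (congrArg norm (preGNS_norm_sq φ (φ.toPreGNS 1))).symm
  have h2 : ‖φ (star a * a)‖ = ‖φ.toPreGNS a‖ ^ 2 := by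
    simpa using (congrArg norm (preGNS_norm_sq φ (φ.toPreGNS a))).symm
  have h3 := norm_apply_le_of_nonneg φ _ (star_mul_self_nonneg a)
  rw [CStarRing.norm_star_mul_self, h1, h2] at h3
  have h4 : ‖φ.toPreGNS a‖ ≤ ‖φ.toPreGNS 1‖ * ‖a‖ :=
    (pow_le_pow_iff_left₀ (norm_nonneg _) (by positivity) two_ne_zero).1 (by linarith)
  calc ‖φ a‖ ≤ ‖φ.toPreGNS 1‖ * (‖φ.toPreGNS 1‖ * ‖a‖) := hcs.trans (by gcongr)
    _ = ‖φ 1‖ * ‖a‖ := by rw [h1]; ring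

end PositiveLinearMap

namespace CStarState

def ofPositiveLinearMap (φ : A →ₚ[ℂ] ℂ) (h1 : φ 1 ≠ 0) : CStarState A where
  toFun := (‖φ 1‖⁻¹ : ℝ) • φ.toLinearMap.mkContinuous ‖φ 1‖ φ.norm_apply_le_norm_apply_one
  pos a ha := by
    change 0 ≤ (‖φ 1‖⁻¹ : ℝ) • φ a
    exact smul_nonneg (by positivity) (φ.map_nonneg ha)
  norm_one := by
    have hnorm (a : A) : ‖(‖φ 1‖⁻¹ : ℝ) • φ a‖ = ‖φ 1‖⁻¹ * ‖φ a‖ := by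
      rw [norm_smul, Real.norm_of_nonneg (by positivity)]
    refine le_antisymm (ContinuousLinearMap.opNorm_le_bound _ zero_le_one fun a => ?_) ?_
    · change ‖(‖φ 1‖⁻¹ : ℝ) • φ a‖ ≤ 1 * ‖a‖
      rw [hnorm, one_mul, inv_mul_le_iff₀ (norm_pos_iff.2 h1)]
      exact φ.norm_apply_le_norm_apply_one a
    · have : Nontrivial A := ⟨⟨1, 0, fun h => h1 (by rw [h, map_zero])⟩⟩
      have h := ContinuousLinearMap.le_opNorm
        ((‖φ 1‖⁻¹ : ℝ) • φ.toLinearMap.mkContinuous ‖φ 1‖ φ.norm_apply_le_norm_apply_one) 1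
      change ‖(‖φ 1‖⁻¹ : ℝ) • φ 1‖ ≤ _ at h
      rwa [hnorm, inv_mul_cancel₀ (norm_ne_zero_iff.2 h1), NormOneClass.norm_one, mul_one] at h

lemma ofPositiveLinearMap_apply (φ : A →ₚ[ℂ] ℂ) (h1 : φ 1 ≠ 0) (a : A) :
    (ofPositiveLinearMap φ h1).toFun a = (‖φ 1‖⁻¹ : ℝ) • φ a :=
  rfl

theorem exists_forall_le_re_apply {S : Set A} (hne : S.Nonempty)
    (hconv : Convex ℝ (upperClosure S : Set A)) (hpos : ∀ s ∈ S, 0 ≤ s) {δ : ℝ} (hδ : 0 < δ)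
    (hnorm : ∀ s ∈ S, δ ≤ ‖s‖) :
    ∃ (ω : CStarState A) (c : ℝ), 0 < c ∧ ∀ s ∈ S, c ≤ (ω.toFun s).re := by
  set U : Set A := -{c | 0 ≤ c} + Metric.ball 0 δ
  have hneg_mem (c : A) (hc : 0 ≤ c) : -c ∈ U :=
    ⟨-c, by simpa using hc, 0, Metric.mem_ball_self hδ, add_zero _⟩
  have hdisj : Disjoint U (upperClosure S : Set A) := by
    rw [Set.disjoint_left]
    rintro _ ⟨_, hc, d, hd, rfl⟩ ⟨s, hs, hle⟩
    have hsd : s ≤ d := hle.trans (add_le_of_nonpos_left (neg_nonneg.1 hc))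
    have := CStarAlgebra.norm_le_norm_of_nonneg_of_le (hpos s hs) hsd
    rw [Metric.mem_ball, dist_zero_right] at hd
    linarith [hnorm s hs]
  obtain ⟨f, u, hfU, hfS⟩ := geometric_hahn_banach_open
    ((convex_Ici 0).neg.add (convex_ball 0 δ)) Metric.isOpen_ball.add_left hconv hdisj
  have hu : 0 < u := by simpa using hfU _ (hneg_mem 0 le_rfl)
  have hf (a : A) : 0 ≤ a → 0 ≤ f a :=
    nonneg_of_forall_apply_neg_lt f fun c hc => hfU _ (hneg_mem c hc)
  have hfS' (s : A) (hs : s ∈ S) : u ≤ f s := hfS s (subset_upperClosure hs)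
  have hf1 : 0 < f 1 := by
    obtain ⟨s, hs⟩ := hne
    have := apply_le_norm_mul_apply_one (f : Module.Dual ℝ A) hf (.of_nonneg (hpos s hs))
    exact pos_of_mul_pos_right ((hu.trans_le (hfS' s hs)).trans_le this) (norm_nonneg s)
  set φ := PositiveLinearMap.ofRealNonneg (f : Module.Dual ℝ A) hf
  have hφ (a : A) (ha : 0 ≤ a) : φ a = f a :=
    PositiveLinearMap.ofRealNonneg_apply_of_isSelfAdjoint _ hf (.of_nonneg ha)
  have hφ1 : φ 1 ≠ 0 := by
    rw [hφ 1 zero_le_one]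
    exact_mod_cast hf1.ne'
  refine ⟨ofPositiveLinearMap φ hφ1, u / f 1, div_pos hu hf1, fun s hs => ?_⟩
  rw [ofPositiveLinearMap_apply, hφ 1 zero_le_one, hφ s (hpos s hs), Complex.norm_real,
    Real.norm_of_nonneg hf1.le, Complex.real_smul, ← Complex.ofReal_mul, Complex.ofReal_re,
    inv_mul_eq_div]
  exact div_le_div_of_nonneg_right (hfS' s hs) hf1.le

end CStarState

end CStarAlgebra

section HilbertModule

variable {A E : Type*} [CStarAlgebra A] [PartialOrder A]
  [NormedAddCommGroup E] [Module ℂ E] [SMul Aᵐᵒᵖ E] [RightCStarModule A E]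

lemma CStarState.locSq_le_norm_sq (ω : CStarState A) (x : E) : ω.locSq x ≤ ‖x‖ ^ 2 :=
  calc ω.locSq x ≤ ‖ω.toFun ⟪x, x⟫_A‖ := Complex.re_le_norm _
    _ ≤ ‖ω.toFun‖ * ‖⟪x, x⟫_A‖ := ω.toFun.le_opNorm _
    _ = ‖x‖ ^ 2 := by rw [ω.norm_one, one_mul, RightCStarModule.norm_sq_eq_norm_inner_self]

namespace UnboundedOperator

def graphInner (T : UnboundedOperator E) (x y : T.dom) : A :=
  ⟪(x : E), y⟫_A + ⟪T.toFun x, T.toFun y⟫_A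

variable (T : UnboundedOperator E)

lemma re_apply_graphInner_self (ω : CStarState A) (x : T.dom) :
    (ω.toFun (T.graphInner x x)).re = ω.locSq (x : E) + ω.locSq (T.toFun x) := by
  rw [graphInner, map_add, Complex.add_re, CStarState.locSq, CStarState.locSq]

variable [StarOrderedRing A]

lemma graphInner_self_nonneg (x : T.dom) : 0 ≤ T.graphInner (A := A) x x :=
  add_nonneg RightCStarModule.inner_self_nonneg RightCStarModule.inner_self_nonneg

lemma convexOn_graphInner_self : ConvexOn ℝ Set.univ fun x : T.dom => T.graphInner (A := A) x x :=
  ((RightCStarModule.convexOn_inner_self (A := A)).comp_linearMap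
    (T.dom.subtype.restrictScalars ℝ)).add
    ((RightCStarModule.convexOn_inner_self (A := A)).comp_linearMap (T.toFun.restrictScalars ℝ))

lemma norm_sq_add_norm_sq_le_two_mul_norm_graphInner (x : T.dom) :
    ‖(x : E)‖ ^ 2 + ‖T.toFun x‖ ^ 2 ≤ 2 * ‖T.graphInner (A := A) x x‖ := by
  have h1 : ‖⟪(x : E), x⟫_A‖ ≤ ‖T.graphInner x x‖ :=
    CStarAlgebra.norm_le_norm_of_nonneg_of_le RightCStarModule.inner_self_nonneg
      (le_add_of_nonneg_right RightCStarModule.inner_self_nonneg)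
  have h2 : ‖⟪T.toFun x, T.toFun x⟫_A‖ ≤ ‖T.graphInner x x‖ :=
    CStarAlgebra.norm_le_norm_of_nonneg_of_le RightCStarModule.inner_self_nonneg
      (le_add_of_nonneg_left RightCStarModule.inner_self_nonneg)
  rw [← RightCStarModule.norm_sq_eq_norm_inner_self] at h1 h2
  linarith

end UnboundedOperator

end HilbertModule

theorem core_criterion_general
    {A E : Type*} [CStarAlgebra A] [PartialOrder A] [StarOrderedRing A]
    [NormedAddCommGroup E] [Module ℂ E] [SMul Aᵐᵒᵖ E] [RightCStarModule A E]
    (T : UnboundedOperator E)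
    (𝓔 : Submodule ℂ E) (hsub : ∀ y ∈ 𝓔, y ∈ T.dom) :
    (∀ (x : T.dom) (ε : ℝ), 0 < ε → ∃ (y : E) (hy : y ∈ 𝓔),
        ‖(x : E) - y‖ ^ 2 + ‖T.toFun x - T.toFun ⟨y, hsub y hy⟩‖ ^ 2 < ε)
    ↔ (∀ (ω : CStarState A) (x : T.dom) (ε : ℝ), 0 < ε → ∃ (y : E) (hy : y ∈ 𝓔),
        ω.locSq ((x : E) - y) + ω.locSq (T.toFun x - T.toFun ⟨y, hsub y hy⟩) < ε) := by
  refine ⟨fun h ω x ε hε => ?_, fun H x ε hε => ?_⟩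
  · obtain ⟨y, hy, hlt⟩ := h x ε hε
    exact ⟨y, hy, by linarith [ω.locSq_le_norm_sq ((x : E) - y),
      ω.locSq_le_norm_sq (T.toFun x - T.toFun ⟨y, hsub y hy⟩)]⟩
  by_contra! hfar
  set 𝓔T : Submodule ℂ T.dom := 𝓔.comap T.dom.subtype
  set F : T.dom → A := fun y => T.graphInner (x - y) (x - y)
  have hF : ConvexOn ℝ 𝓔T F :=
    (T.convexOn_graphInner_self.comp_affineMap
      (AffineMap.const ℝ T.dom x - AffineMap.id ℝ T.dom)).subset (Set.subset_univ _)
      (𝓔T.restrictScalars ℝ).convex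
  have hF_norm (y : T.dom) (hy : y ∈ 𝓔T) : ε / 2 ≤ ‖F y‖ := by
    have hle := T.norm_sq_add_norm_sq_le_two_mul_norm_graphInner (A := A) (x - y)
    rw [Submodule.coe_sub, map_sub] at hle
    linarith [hfar y hy]
  obtain ⟨ω, c, hc, hωc⟩ := CStarState.exists_forall_le_re_apply (S := F '' 𝓔T)
    ⟨F 0, 0, 𝓔T.zero_mem, rfl⟩ hF.convex_upperClosure_image
    (by rintro _ ⟨y, -, rfl⟩; exact T.graphInner_self_nonneg _) (half_pos hε)
    (by rintro _ ⟨y, hy, rfl⟩; exact hF_norm y hy)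
  obtain ⟨y, hy, hlt⟩ := H ω x c hc
  have hge := hωc _ ⟨⟨y, hsub y hy⟩, hy, rfl⟩
  rw [T.re_apply_graphInner_self, map_sub] at hge
  exact (not_lt.2 hge) hlt

/-- **Core criterion.** Let `T` be a closed semiregular operator in a Hilbert C⋆-module `E`
over `A` and let `𝓔 ⊆ dom T` be a submodule. Then `𝓔` is a core for `T` (dense in `dom T`
for the graph norm) if and only if for every state `ω` on `A` the image `ι_ω(𝓔)` is a core
for the localized operator `T^ω` in the Hilbert space `E^ω` (i.e. `ι_ω(𝓔)` is dense in
`ι_ω(dom T)` for the graph seminorm induced by `ω`). -/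
theorem core_criterion
    {A E : Type*} [CStarAlgebra A] [PartialOrder A] [StarOrderedRing A]
    [NormedAddCommGroup E] [Module ℂ E] [SMul Aᵐᵒᵖ E] [RightCStarModule A E]
    (T : UnboundedOperator E) (hclosed : T.IsClosedOp) (hsemi : T.Semiregular (A := A))
    (𝓔 : Submodule ℂ E) (hsub : ∀ y ∈ 𝓔, y ∈ T.dom) :
    (∀ (x : T.dom) (ε : ℝ), 0 < ε → ∃ (y : E) (hy : y ∈ 𝓔),
        ‖(x : E) - y‖ ^ 2 + ‖T.toFun x - T.toFun ⟨y, hsub y hy⟩‖ ^ 2 < ε)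
    ↔ (∀ (ω : CStarState A) (x : T.dom) (ε : ℝ), 0 < ε → ∃ (y : E) (hy : y ∈ 𝓔),
        ω.locSq ((x : E) - y) + ω.locSq (T.toFun x - T.toFun ⟨y, hsub y hy⟩) < ε) :=
  core_criterion_general T 𝓔 hsub
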